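/- For all integers m and n, BP(m)·BP(n) + BP(m+1)·BP(n+1) = 4·(Q(m+n+4)·1 − Q(m+n+4)·i − P(m+n+4)·j + P(m+n+4)·ij). -/

import Mathlib

/-!
For sequences `X`, `Y` satisfying the Pell recurrence in any ring, the quantity
`X m * Y n + X (m + 1) * Y (n + 1)` is unchanged when `m` is raised and `n` lowered by one, so it
depends only on `m + n` and equals `X 0 * Y (m + n) + X 1 * Y (m + n + 1)`. The bicomplex Pell
numbers satisfy the recurrence, so the left side is `BP 0 * BP k + BP 1 * BP (k + 1)` with
`k = m + n`. As functions of `k`, this and the right side both satisfy the recurrence, hence agree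
as soon as they agree at `k = 0` and `k = 1`, which is a finite computation with `i² = j² = -1`.
-/

open scoped TensorProduct

noncomputable def bi : ℂ ⊗[ℝ] ℂ := Complex.I ⊗ₜ[ℝ] 1
noncomputable def bj : ℂ ⊗[ℝ] ℂ := (1 : ℂ) ⊗ₜ[ℝ] Complex.I
noncomputable def bij : ℂ ⊗[ℝ] ℂ := Complex.I ⊗ₜ[ℝ] Complex.I

/-- The bicomplex Pell number `BP n = P n + P (n+1) i + P (n+2) j + P (n+3) ij`. -/
noncomputable def BP (P : ℤ → ℤ) (n : ℤ) : ℂ ⊗[ℝ] ℂ :=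
  (P n : ℝ) • (1 : ℂ ⊗[ℝ] ℂ) + (P (n + 1) : ℝ) • bi + (P (n + 2) : ℝ) • bj +
    (P (n + 3) : ℝ) • bij

def IsPellSeq {R : Type*} [Ring R] (X : ℤ → R) : Prop :=
  ∀ n, X (n + 2) = 2 * X (n + 1) + X n

namespace IsPellSeq

variable {R A : Type*}

section Ring

variable [Ring R] {X Y : ℤ → R}

theorem add (hX : IsPellSeq X) (hY : IsPellSeq Y) : IsPellSeq fun n => X n + Y n := fun n => by
  simp only [hX n, hY n]
  noncomm_ring

theorem sub (hX : IsPellSeq X) (hY : IsPellSeq Y) : IsPellSeq fun n => X n - Y n := fun n => by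
  simp only [hX n, hY n]
  noncomm_ring

theorem comp_add_right (hX : IsPellSeq X) (k : ℤ) : IsPellSeq fun n => X (n + k) := fun n => by
  simpa only [add_right_comm _ k] using hX (n + k)

theorem const_mul (hX : IsPellSeq X) (c : R) : IsPellSeq fun n => c * X n := fun n => by
  simp only [hX n, mul_add, ← mul_assoc, (Commute.ofNat_right c 2).eq]

theorem intCast {X : ℤ → ℤ} (hX : IsPellSeq X) : IsPellSeq fun n => (X n : R) := fun n => by
  simp only [hX n, Int.cast_add, Int.cast_mul, Int.cast_ofNat]

theorem eq_of_apply_zero_of_apply_one (hX : IsPellSeq X) (hY : IsPellSeq Y) (h0 : X 0 = Y 0)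
    (h1 : X 1 = Y 1) : X = Y := by
  suffices h : ∀ n, X n = Y n ∧ X (n + 1) = Y (n + 1) from funext fun n => (h n).1
  intro n
  induction n using Int.induction_on with
  | zero => exact ⟨h0, h1⟩
  | succ k ih =>
    refine ⟨ih.2, ?_⟩
    rw [add_assoc, one_add_one_eq_two, hX, hY, ih.1, ih.2]
  | pred k ih =>
    refine ⟨?_, by rw [sub_add_cancel]; exact ih.1⟩
    have hXk := hX (-k - 1)
    have hYk := hY (-k - 1)
    rw [show -(k : ℤ) - 1 + 2 = -k + 1 by ring, show -(k : ℤ) - 1 + 1 = -k by ring] at hXk hYk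
    rw [← ih.1, ← ih.2, hXk] at hYk
    exact add_left_cancel hYk

theorem mul_add_mul_succ_eq (hX : IsPellSeq X) (hY : IsPellSeq Y) (m n : ℤ) :
    X m * Y n + X (m + 1) * Y (n + 1) = X 0 * Y (m + n) + X 1 * Y (m + n + 1) := by
  let F : ℤ → R := fun i => X i * Y (m + n - i) + X (i + 1) * Y (m + n - i + 1)
  have hF : Function.Periodic F 1 := fun i => by
    have hYi := hY (m + n - (i + 1))
    rw [show m + n - (i + 1) + 2 = m + n - i + 1 by ring,
      show m + n - (i + 1) + 1 = m + n - i by ring] at hYi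
    simp only [F, add_assoc, one_add_one_eq_two, hX i, hYi]
    noncomm_ring
  simpa [F] using hF.int_mul_eq m

end Ring

theorem smul_const [CommRing R] [Ring A] [Algebra R A] {X : ℤ → R} (hX : IsPellSeq X) (v : A) :
    IsPellSeq fun n => X n • v := fun n => by
  simp only [hX n, add_smul, two_mul]

theorem const_smul [CommRing R] [Ring A] [Algebra R A] {X : ℤ → A} (hX : IsPellSeq X) (c : R) :
    IsPellSeq fun n => c • X n := fun n => by
  simp only [hX n, smul_add, mul_smul_comm]

theorem apply_two_three_four_five {X : ℤ → ℤ} (hX : IsPellSeq X) :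
    X 2 = 2 * X 1 + X 0 ∧ X 3 = 5 * X 1 + 2 * X 0 ∧ X 4 = 12 * X 1 + 5 * X 0 ∧
      X 5 = 29 * X 1 + 12 * X 0 := by
  have h2 := hX 0
  have h3 := hX 1
  have h4 := hX 2
  have h5 := hX 3
  norm_num at h2 h3 h4 h5
  omega

end IsPellSeq

theorem bi_mul_bi : bi * bi = -1 := by
  simp [bi, Algebra.TensorProduct.tmul_mul_tmul, TensorProduct.neg_tmul,
    Algebra.TensorProduct.one_def]

theorem bj_mul_bj : bj * bj = -1 := by
  simp [bj, Algebra.TensorProduct.tmul_mul_tmul, TensorProduct.tmul_neg,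
    Algebra.TensorProduct.one_def]

theorem bij_mul_bij : bij * bij = 1 := by
  simp [bij, Algebra.TensorProduct.tmul_mul_tmul, TensorProduct.neg_tmul, TensorProduct.tmul_neg,
    Algebra.TensorProduct.one_def]

theorem bi_mul_bj : bi * bj = bij := by
  simp [bi, bj, bij, Algebra.TensorProduct.tmul_mul_tmul]

theorem bi_mul_bij : bi * bij = -bj := by
  simp [bi, bj, bij, Algebra.TensorProduct.tmul_mul_tmul, TensorProduct.neg_tmul]

theorem bj_mul_bij : bj * bij = -bi := by
  simp [bi, bj, bij, Algebra.TensorProduct.tmul_mul_tmul, TensorProduct.tmul_neg]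

theorem bicomplex_mul_coords (a b c d a' b' c' d' : ℝ) :
    (a • 1 + b • bi + c • bj + d • bij) * (a' • 1 + b' • bi + c' • bj + d' • bij) =
      (a * a' - b * b' - c * c' + d * d') • 1 + (a * b' + b * a' - c * d' - d * c') • bi +
        (a * c' + c * a' - b * d' - d * b') • bj + (a * d' + d * a' + b * c' + c * b') • bij := by
  simp only [mul_add, add_mul, smul_mul_smul_comm, one_mul, mul_one, bi_mul_bi, bj_mul_bj,
    bij_mul_bij, bi_mul_bj, bi_mul_bij, bj_mul_bij, mul_comm bj bi, mul_comm bij bi,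
    mul_comm bij bj, smul_neg]
  match_scalars <;> ring

theorem isPellSeq_BP {P : ℤ → ℤ} (hP : IsPellSeq P) : IsPellSeq (BP P) := by
  have hPR : IsPellSeq fun n => (P n : ℝ) := hP.intCast
  exact (((hPR.smul_const 1).add ((hPR.comp_add_right 1).smul_const bi)).add
    ((hPR.comp_add_right 2).smul_const bj)).add ((hPR.comp_add_right 3).smul_const bij)

theorem bicomplexPell_mul_add_mul (P Q : ℤ → ℤ)
    (hP : ∀ n : ℤ, P (n + 2) = 2 * P (n + 1) + P n) (hP0 : P 0 = 0) (hP1 : P 1 = 1)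
    (hQ : ∀ n : ℤ, Q (n + 2) = 2 * Q (n + 1) + Q n) (hQ0 : Q 0 = 2) (hQ1 : Q 1 = 2)
    (m n : ℤ) :
    BP P m * BP P n + BP P (m + 1) * BP P (n + 1) =
      (4 : ℝ) • ((Q (m + n + 4) : ℝ) • (1 : ℂ ⊗[ℝ] ℂ) - (Q (m + n + 4) : ℝ) • bi -
        (P (m + n + 4) : ℝ) • bj + (P (m + n + 4) : ℝ) • bij) := by
  have hBP : IsPellSeq (BP P) := isPellSeq_BP hP
  have hPR : IsPellSeq fun k => (P (k + 4) : ℝ) := (IsPellSeq.intCast hP).comp_add_right 4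
  have hQR : IsPellSeq fun k => (Q (k + 4) : ℝ) := (IsPellSeq.intCast hQ).comp_add_right 4
  obtain ⟨p2, p3, p4, p5⟩ := IsPellSeq.apply_two_three_four_five hP
  obtain ⟨q2, q3, q4, q5⟩ := IsPellSeq.apply_two_three_four_five hQ
  have h_sum : (fun k => BP P 0 * BP P k + BP P 1 * BP P (k + 1)) = fun k =>
      (4 : ℝ) • ((Q (k + 4) : ℝ) • (1 : ℂ ⊗[ℝ] ℂ) - (Q (k + 4) : ℝ) • bi -
        (P (k + 4) : ℝ) • bj + (P (k + 4) : ℝ) • bij) := by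
    refine IsPellSeq.eq_of_apply_zero_of_apply_one
      ((hBP.const_mul _).add ((hBP.comp_add_right 1).const_mul _))
      ((((hQR.smul_const 1).sub (hQR.smul_const bi)).sub (hPR.smul_const bj)).add
        (hPR.smul_const bij) |>.const_smul 4) ?_ ?_
    all_goals
      simp only [BP, bicomplex_mul_coords]
      norm_num [hP0, hP1, hQ0, hQ1, p2, p3, p4, p5, q2, q3, q4, q5]
      match_scalars <;> norm_num
  rw [hBP.mul_add_mul_succ_eq hBP]
  exact congrFun h_sum (m + n)
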